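/- Suppose given a commutative square with vertical maps f : A → X and g : C → Y and a map ι : X → Y such that the square commutes (the composite A → C → Y equals ι ∘ f). Then secat(g) + 1 ≤ (secat(ι) + 1)(secat(f) + 1). -/

import Mathlib

open unitInterval Set ContinuousMap

universe u

/-- `f` admits an open cover of its target by `n+1` open sets, on each of which the
inclusion factors through `f` up to homotopy (local homotopy sections). -/
def CoveredBySections {A X : Type*} [TopologicalSpace A] [TopologicalSpace X]
    (f : C(A, X)) (n : ℕ) : Prop :=
  ∃ U : Fin (n + 1) → Set X, (∀ i, IsOpen (U i)) ∧ (⋃ i, U i) = Set.univ ∧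
    ∀ i, ∃ s : C(U i, A),
      (f.comp s).Homotopic ⟨Subtype.val, continuous_subtype_val⟩

/-- The (reduced) sectional category of a map, as an extended natural number. -/
noncomputable def secat {A X : Type*} [TopologicalSpace A] [TopologicalSpace X]
    (f : C(A, X)) : ℕ∞ :=
  sInf ((fun n : ℕ => (n : ℕ∞)) '' {n : ℕ | CoveredBySections f n})

/-- A cofibration: a map with the homotopy extension property with respect to
all spaces. -/
def IsCofibration {A X : Type u} [TopologicalSpace A] [TopologicalSpace X]
    (i : C(A, X)) : Prop :=
  ∀ (Z : Type u) [TopologicalSpace Z] (h₀ : C(X, Z)) (H : C(A × I, Z)),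
    (∀ a, H (a, 0) = h₀ (i a)) →
    ∃ G : C(X × I, Z), (∀ a t, G (i a, t) = H (a, t)) ∧ ∀ x, G (x, 0) = h₀ x

/-!
Take open covers `U_0, …, U_n` of `X` and `V_0, …, V_m` of `Y` carrying homotopy sections
`t_i` of `f` and `s_j` of `ι`. The `(m + 1)(n + 1)` open sets `s_j⁻¹(U_i) ⊆ V_j` cover `Y`,
and over each of them `φ ∘ t_i ∘ s_j` is a homotopy section of `g`.
-/

section SectionalCategory

variable {A C X Y : Type*} [TopologicalSpace A] [TopologicalSpace C]
  [TopologicalSpace X] [TopologicalSpace Y]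

def HasHomotopySectionOn (f : C(A, X)) (W : Set X) : Prop :=
  ∃ s : C(W, A), (f.comp s).Homotopic ⟨Subtype.val, continuous_subtype_val⟩

lemma secat_le_of_coveredBySections {f : C(A, X)} {n : ℕ} (h : CoveredBySections f n) :
    secat f ≤ n :=
  sInf_le ⟨n, h, rfl⟩

lemma secat_eq_top_or_exists_coveredBySections (f : C(A, X)) :
    secat f = ⊤ ∨ ∃ n, CoveredBySections f n ∧ secat f = n := by
  by_cases hS : {n : ℕ | CoveredBySections f n}.Nonempty
  · refine .inr ⟨sInf {n | CoveredBySections f n}, Nat.sInf_mem hS,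
      le_antisymm (secat_le_of_coveredBySections (Nat.sInf_mem hS)) (le_sInf ?_)⟩
    rintro b ⟨k, hk, rfl⟩
    exact ENat.natCast_le_natCast.mpr (Nat.sInf_le hk)
  · rw [Set.not_nonempty_iff_eq_empty] at hS
    simp [secat, hS]

lemma coveredBySections_of_equiv {κ : Type*} {f : C(A, X)} {n : ℕ} (e : Fin (n + 1) ≃ κ)
    (U : κ → Set X) (hopen : ∀ k, IsOpen (U k)) (hcover : ⋃ k, U k = univ)
    (hsec : ∀ k, HasHomotopySectionOn f (U k)) : CoveredBySections f n :=
  ⟨U ∘ e, fun i => hopen (e i), by rw [← hcover, ← e.surjective.iUnion_comp]; rfl,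
    fun i => hsec (e i)⟩

def sectionPreimage {V : Set Y} (s : C(V, X)) (U : Set X) : Set Y :=
  Subtype.val '' (s ⁻¹' U)

lemma isOpen_sectionPreimage {V : Set Y} {U : Set X} (hV : IsOpen V) (hU : IsOpen U)
    (s : C(V, X)) : IsOpen (sectionPreimage s U) :=
  hV.isOpenMap_subtype_val _ (hU.preimage s.continuous)

lemma sectionPreimage_subset {V : Set Y} (s : C(V, X)) (U : Set X) :
    sectionPreimage s U ⊆ V := by
  rintro _ ⟨v, -, rfl⟩
  exact v.2

lemma hasHomotopySectionOn_sectionPreimage {f : C(A, X)} {g : C(C, Y)} {ι : C(X, Y)}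
    {φ : C(A, C)} (hcomm : ∀ a, g (φ a) = ι (f a)) {U : Set X} {V : Set Y}
    (hU : HasHomotopySectionOn f U) {s : C(V, X)}
    (hs : (ι.comp s).Homotopic ⟨Subtype.val, continuous_subtype_val⟩) :
    HasHomotopySectionOn g (sectionPreimage s U) := by
  obtain ⟨t, ht⟩ := hU
  set W := sectionPreimage s U
  let inclusion : C(W, V) :=
    ⟨fun w => ⟨w, sectionPreimage_subset s U w.2⟩, by fun_prop⟩
  have maps_to : ∀ w : W, s (inclusion w) ∈ U := by
    rintro ⟨_, v, hv, rfl⟩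
    exact hv
  let r : C(W, U) := ⟨fun w => ⟨s (inclusion w), maps_to w⟩, by fun_prop⟩
  refine ⟨φ.comp (t.comp r), ?_⟩
  have square : g.comp (φ.comp (t.comp r)) = ι.comp ((f.comp t).comp r) := by
    ext w
    exact hcomm _
  rw [square]
  exact (Homotopic.refl ι).comp (ht.comp (Homotopic.refl r)) |>.trans
    (hs.comp (Homotopic.refl inclusion))

lemma coveredBySections_of_comm_square {f : C(A, X)} {g : C(C, Y)} {ι : C(X, Y)}
    {φ : C(A, C)} (hcomm : ∀ a, g (φ a) = ι (f a)) {m n : ℕ}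
    (hf : CoveredBySections f n) (hι : CoveredBySections ι m) :
    CoveredBySections g (m * n + m + n) := by
  obtain ⟨U, hUopen, hUcover, hUsec⟩ := hf
  obtain ⟨V, hVopen, hVcover, hVsec⟩ := hι
  choose s hs using hVsec
  let W : Fin (m + 1) × Fin (n + 1) → Set Y := fun p => sectionPreimage (s p.1) (U p.2)
  have hcover : ⋃ p, W p = univ := by
    refine eq_univ_of_forall fun y => ?_
    obtain ⟨j, hj⟩ := mem_iUnion.mp (hVcover ▸ mem_univ y)
    obtain ⟨i, hi⟩ := mem_iUnion.mp (hUcover ▸ mem_univ (s j ⟨y, hj⟩))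
    exact mem_iUnion.mpr ⟨(j, i), ⟨y, hj⟩, hi, rfl⟩
  exact coveredBySections_of_equiv
    ((finCongr (by ring)).trans finProdFinEquiv.symm) W
    (fun p => isOpen_sectionPreimage (hVopen p.1) (hUopen p.2) (s p.1)) hcover
    (fun p => hasHomotopySectionOn_sectionPreimage hcomm (hUsec p.2) (hs p.1))

end SectionalCategory

theorem secat_square_general {A C X Y : Type u} [TopologicalSpace A] [TopologicalSpace C]
    [TopologicalSpace X] [TopologicalSpace Y]
    (f : C(A, X)) (g : C(C, Y)) (ι : C(X, Y)) (φ : C(A, C))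
    (hcomm : ∀ a, g (φ a) = ι (f a)) :
    secat g + 1 ≤ (secat ι + 1) * (secat f + 1) := by
  rcases secat_eq_top_or_exists_coveredBySections ι with hι | ⟨m, hm, hι⟩
  · rw [hι, top_add, ENat.top_mul (by simp)]
    exact le_top
  rcases secat_eq_top_or_exists_coveredBySections f with hf | ⟨n, hn, hf⟩
  · rw [hf, top_add, ENat.mul_top (by simp)]
    exact le_top
  calc secat g + 1 ≤ ((m * n + m + n : ℕ) : ℕ∞) + 1 :=
        add_le_add_left (secat_le_of_coveredBySections
          (coveredBySections_of_comm_square hcomm hn hm)) 1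
    _ = (secat ι + 1) * (secat f + 1) := by rw [hι, hf]; push_cast; ring

/-- Sectional category in a commutative square: if `g ∘ φ = ι ∘ f` then
`secat(g) + 1 ≤ (secat(ι) + 1)(secat(f) + 1)`. -/
theorem secat_square {A C X Y : Type u} [TopologicalSpace A] [TopologicalSpace C]
    [TopologicalSpace X] [TopologicalSpace Y]
    [PathConnectedSpace A] [PathConnectedSpace C]
    [PathConnectedSpace X] [PathConnectedSpace Y]
    (f : C(A, X)) (g : C(C, Y)) (ι : C(X, Y)) (φ : C(A, C))
    (hf : IsCofibration f) (hg : IsCofibration g) (hι : IsCofibration ι)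
    (hcomm : ∀ a, g (φ a) = ι (f a)) :
    secat g + 1 ≤ (secat ι + 1) * (secat f + 1) :=
  secat_square_general f g ι φ hcomm
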